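/- Let R be a normal, subcritical, complete rule, and let τ = X^k Ξ_L ∈ 𝔗∘ with k ∈ ℕ^d and L a finite multiset of ℕ^d (a tree with only noise edges). Then ℳ_{(13)(2)(4)}(Δ^− ⊗ Δ^−)Δ^+ τ = (id ⊗ Δ^+)Δ^− τ, where ℳ_{(13)(2)(4)} : ℱ_− ⊗ 𝒯 ⊗ ℱ_− ⊗ 𝒯_+ → ℱ_− ⊗ 𝒯 ⊗ 𝒯_+ is the linear map sending g ⊗ σ ⊗ h ⊗ f to (g·h) ⊗ σ ⊗ f (forest product in the first slot). -/

import Mathlib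

open MeasureTheory
open scoped Classical

noncomputable section

namespace RS

inductive Typ : Type
  | Xi : Typ
  | In : Typ
deriving DecidableEq

/-- multi-indices `ℕ^d` -/
abbrev Nd (d : ℕ) := Fin d → ℕ

/-- edge types `ℰ = 𝔏 × ℕ^d` -/
abbrev ET (d : ℕ) := Typ × Nd d

/-- Decorated rooted trees (with an extended decoration `a : ℝ` at each node),
in the symbolic representation `𝟏^a X^k Ξ_L ∏_{(m,τ) ∈ B} 𝓘_m[τ]`.
Trees of the reduced structure are those with all extended decorations zero. -/
inductive Tr (d : ℕ) : Type
  | node (a : ℝ) (k : Nd d) (L : List (Nd d)) (B : List (Nd d × Tr d)) : Tr d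

namespace Tr

instance {d} : DecidableEq (Tr d) := Classical.decEq _

variable {d : ℕ}

/-- the tree product: join roots, add root decorations -/
def mul : Tr d → Tr d → Tr d
  | node a k L B, node a' k' L' B' => node (a + a') (k + k') (L ++ L') (B ++ B')

/-- the unit tree `𝟏` -/
def one (d : ℕ) : Tr d := node 0 0 [] []

/-- `X^k` -/
def Xpow (k : Nd d) : Tr d := node 0 k [] []

/-- `Ξ_l` -/
def Xi (l : Nd d) : Tr d := node 0 0 [l] []

/-- `𝓘_m[τ]` -/
def plant (m : Nd d) (τ : Tr d) : Tr d := node 0 0 [] [(m, τ)]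

/-- `𝟏^a` -/
def oneA {d : ℕ} (a : ℝ) : Tr d := node a 0 [] []

/-- the `𝔰`-degree of a multi-index -/
def degN (s : Fin d → ℝ) (k : Nd d) : ℝ := ∑ i, (k i : ℝ) * s i

mutual
  /-- the degree `|τ|_𝔰` (ignoring extended decorations) -/
  def deg (s : Fin d → ℝ) (cXi cI : ℝ) : Tr d → ℝ
    | node _ k L B => degN s k + (L.map fun l => cXi - degN s l).sum + degB s cXi cI B
  def degB (s : Fin d → ℝ) (cXi cI : ℝ) : List (Nd d × Tr d) → ℝ
    | [] => 0
    | y :: ys => (deg s cXi cI y.2 + cI - degN s y.1) + degB s cXi cI ys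
end

mutual
  /-- sum of all extended decorations of a tree -/
  def oSum : Tr d → ℝ
    | node a _ _ B => a + oSumB B
  def oSumB : List (Nd d × Tr d) → ℝ
    | [] => 0
    | y :: ys => oSum y.2 + oSumB ys
end

/-- the degree `|τ|₊ = |τ|_𝔰 + Σ_x 𝔬(x)` -/
def degp (s : Fin d → ℝ) (cXi cI : ℝ) (τ : Tr d) : ℝ := deg s cXi cI τ + oSum τ

/-- trees all of whose extended decorations vanish (i.e. trees of the reduced structure) -/
inductive ZeroO : Tr d → Prop
  | node {k : Nd d} {L : List (Nd d)} {B : List (Nd d × Tr d)} :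
      (∀ y ∈ B, ZeroO y.2) → ZeroO (node 0 k L B)

/-- the multiset `𝒩(τ)` of edge decorations at the root -/
def rootN : Tr d → Multiset (ET d)
  | node _ _ L B =>
      (↑(L.map fun l => ((Typ.Xi, l) : ET d)) : Multiset (ET d)) +
      (↑(B.map fun y => ((Typ.In, y.1) : ET d)) : Multiset (ET d))

/-- the polynomial decoration at the root -/
def rootK : Tr d → Nd d
  | node _ k _ _ => k

/-- the extended decoration at the root -/
def rootO : Tr d → ℝ
  | node a _ _ _ => a

/-- planted trees: `𝟏^a Ξ_l` or `𝟏^a 𝓘_m[σ]` -/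
def Planted : Tr d → Prop
  | node _ k L B => k = 0 ∧ L.length + B.length = 1

/-- a tree strongly conforms to a rule `R` if the multiset of outgoing edge
decorations at every node belongs to `R` -/
inductive Conforms (R : Set (Multiset (ET d))) : Tr d → Prop
  | node {a : ℝ} {k : Nd d} {L : List (Nd d)} {B : List (Nd d × Tr d)} :
      rootN (node a k L B) ∈ R → (∀ y ∈ B, Conforms R y.2) →
      Conforms R (node a k L B)

end Tr

/-- a rule is normal if it is closed under sub-multisets -/
def Normal {d : ℕ} (R : Set (Multiset (ET d))) : Prop :=
  ∀ A B : Multiset (ET d), A ≤ B → B ∈ R → A ∈ R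

/-- `reg(N) = Σ_{(𝔱,k) ∈ N} (reg(𝔱) - |k|_𝔰)` -/
def regMS {d : ℕ} (s : Fin d → ℝ) (reg : Typ → ℝ) (N : Multiset (ET d)) : ℝ :=
  (N.map fun o => reg o.1 - Tr.degN s o.2).sum

/-- subcriticality of a rule: there is `reg : 𝔏 → ℝ` with `reg(Ξ) < |Ξ|_𝔰` and
`reg(𝓘) < |𝓘|_𝔰 + inf_{N ∈ R} reg(N)` -/
def Subcritical {d : ℕ} (s : Fin d → ℝ) (cXi cI : ℝ) (R : Set (Multiset (ET d))) : Prop :=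
  ∃ reg : Typ → ℝ, reg Typ.Xi < cXi ∧
    ∃ c : ℝ, (∀ N ∈ R, c ≤ regMS s reg N) ∧ reg Typ.In < cI + c

/-- the set of strongly conforming trees of the reduced structure, `𝔗∘` -/
def Tcirc {d : ℕ} (R : Set (Multiset (ET d))) : Set (Tr d) :=
  {τ | Tr.ZeroO τ ∧ Tr.Conforms R τ}


/-- the factorial `k! = ∏ (k i)!` of a multi-index -/
def ndFact {d : ℕ} (k : Nd d) : ℕ := ∏ i, (k i).factorial

/-- the (finite, when `s i ≥ 1`) set `{k ∈ ℕ^d : |k|_𝔰 < c}` -/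
def lowIdx {d : ℕ} (s : Fin d → ℝ) (c : ℝ) : Finset (Nd d) :=
  (Fintype.piFinset fun _ : Fin d => Finset.range (Nat.ceil (max c 0) + 1)).filter
    fun k => Tr.degN s k < c


variable {d : ℕ}

/-- product on the model of `𝒱 ⊗ 𝒱₊` induced by the tree product on each factor -/
def mul2 (u v : (Tr d × Tr d) →₀ ℝ) : (Tr d × Tr d) →₀ ℝ :=
  u.sum fun p c => v.sum fun q c' =>
    Finsupp.single (Tr.mul p.1 q.1, Tr.mul p.2 q.2) (c * c')

/-- `Δ⁺ X^k = Σ_{n ≤ k} binom(k,n) X^n ⊗ X^{k-n}` -/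
def dpX (k : Nd d) : (Tr d × Tr d) →₀ ℝ :=
  ∑ n ∈ Finset.Iic k,
    Finsupp.single (Tr.Xpow n, Tr.Xpow (k - n)) (∏ i, ((k i).choose (n i) : ℝ))

/-- `Δ⁺ 𝓘_m[τ] = (𝓘_m ⊗ id) Δ⁺τ + Σ_{|l|_𝔰 < |𝓘_m τ|₊} (X^l/l!) ⊗ 𝓘_{l+m}[τ]`,
given `D = Δ⁺τ` -/
def dpI (s : Fin d → ℝ) (cXi cI : ℝ) (m : Nd d) (τ : Tr d)
    (D : (Tr d × Tr d) →₀ ℝ) : (Tr d × Tr d) →₀ ℝ :=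
  (D.sum fun p c => Finsupp.single (Tr.plant m p.1, p.2) c) +
    ∑ l ∈ lowIdx s (Tr.degp s cXi cI τ + cI - Tr.degN s m),
      Finsupp.single (Tr.Xpow l, Tr.plant (l + m) τ) ((ndFact l : ℝ))⁻¹

mutual
  /-- the positive coaction `Δ⁺ : 𝒯 → 𝒯 ⊗ 𝒯₊` (no projection needed on the left) -/
  def dp (s : Fin d → ℝ) (cXi cI : ℝ) : Tr d → (Tr d × Tr d) →₀ ℝ
    | .node a k L B =>
        mul2 (Finsupp.single (Tr.node a 0 L [], Tr.one d) 1)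
          (mul2 (dpX k) (dpB s cXi cI B))
  def dpB (s : Fin d → ℝ) (cXi cI : ℝ) : List (Nd d × Tr d) → (Tr d × Tr d) →₀ ℝ
    | [] => Finsupp.single (Tr.one d, Tr.one d) 1
    | y :: ys => mul2 (dpI s cXi cI y.1 y.2 (dp s cXi cI y.2)) (dpB s cXi cI ys)
end

/-- as `dpI` but with the projection `π₊` (onto the span of trees satisfying `P`)
applied to the planted tree in the left factor -/
def dpIP (P : Tr d → Prop) (s : Fin d → ℝ) (cXi cI : ℝ) (m : Nd d) (τ : Tr d)
    (D : (Tr d × Tr d) →₀ ℝ) : (Tr d × Tr d) →₀ ℝ :=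
  (D.sum fun p c =>
    if P (Tr.plant m p.1) then Finsupp.single (Tr.plant m p.1, p.2) c else 0) +
    ∑ l ∈ lowIdx s (Tr.degp s cXi cI τ + cI - Tr.degN s m),
      Finsupp.single (Tr.Xpow l, Tr.plant (l + m) τ) ((ndFact l : ℝ))⁻¹

mutual
  /-- the positive coproduct `Δ⁺ : 𝒯₊ → 𝒯₊ ⊗ 𝒯₊`, with `π₊` the projection onto
  the span of the trees satisfying `P` -/
  def dpP (P : Tr d → Prop) (s : Fin d → ℝ) (cXi cI : ℝ) : Tr d → (Tr d × Tr d) →₀ ℝ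
    | .node a k L B =>
        mul2 (Finsupp.single (Tr.node a 0 L [], Tr.one d) 1)
          (mul2 (dpX k) (dpPB P s cXi cI B))
  def dpPB (P : Tr d → Prop) (s : Fin d → ℝ) (cXi cI : ℝ) :
      List (Nd d × Tr d) → (Tr d × Tr d) →₀ ℝ
    | [] => Finsupp.single (Tr.one d, Tr.one d) 1
    | y :: ys => mul2 (dpIP P s cXi cI y.1 y.2 (dp s cXi cI y.2)) (dpPB P s cXi cI ys)
end

variable {d : ℕ}

/-- A tree overlaid with the data of an extraction: at each node, the part `kA ≤ k`
of the polynomial decoration assigned to the extracted subforest, and on each edge a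
Boolean (whether the edge belongs to the extracted subforest `A`) together with the
extra edge decoration `𝔢_A` (meaningful on boundary edges only).  Noise edges carry
the data `(l, inA, 𝔢_A)` and kernel edges the data `(m, inA, 𝔢_A, child)`. -/
inductive Ch (d : ℕ) : Type
  | node (a : ℝ) (k kA : Nd d) (L : List (Nd d × Bool × Nd d))
      (B : List (Nd d × Bool × Nd d × Ch d)) : Ch d

namespace Ch

variable {d : ℕ}

mutual
  /-- the underlying tree -/
  def shape : Ch d → Tr d
    | .node a k _ L B => Tr.node a k (L.map fun x => x.1) (shapeB B)
  def shapeB : List (Nd d × Bool × Nd d × Ch d) → List (Nd d × Tr d)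
    | [] => []
    | y :: ys => (y.1, shape y.2.2.2) :: shapeB ys
end

/-- whether this node belongs to `A`, given whether its parent edge does -/
def hasA (pa : Bool) : Ch d → Bool
  | .node _ _ _ L B => pa || L.any (fun x => x.2.1) || B.any (fun y => y.2.1)

/-- validity of extraction data, relative to whether the parent edge is in `A`:
`𝔫_A ≤ 𝔫` supported on nodes of `A`, and `𝔢_A` supported on boundary edges
(edges not in `A` whose lower endpoint is in `A`). -/
inductive Valid : Bool → Ch d → Prop
  | node {pa : Bool} {a : ℝ} {k kA : Nd d} {L : List (Nd d × Bool × Nd d)}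
      {B : List (Nd d × Bool × Nd d × Ch d)} :
      kA ≤ k →
      (hasA pa (Ch.node a k kA L B) = false → kA = 0) →
      (∀ x ∈ L, x.2.1 = true → x.2.2 = 0) →
      (hasA pa (Ch.node a k kA L B) = false → ∀ x ∈ L, x.2.2 = 0) →
      (∀ y ∈ B, y.2.1 = true → y.2.2.1 = 0) →
      (hasA pa (Ch.node a k kA L B) = false → ∀ y ∈ B, y.2.2.1 = 0) →
      (∀ y ∈ B, Valid y.2.1 y.2.2.2) →
      Valid pa (Ch.node a k kA L B)

/-- validity of the data of a rooted subtree `A` containing the root (used for the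
global formula for `Δ⁺`), relative to whether this node belongs to `A`. -/
inductive ValidS : Bool → Ch d → Prop
  | node {inA : Bool} {a : ℝ} {k kA : Nd d} {L : List (Nd d × Bool × Nd d)}
      {B : List (Nd d × Bool × Nd d × Ch d)} :
      kA ≤ k →
      (inA = false → kA = 0) →
      (inA = false → ∀ x ∈ L, x.2.1 = false ∧ x.2.2 = 0) →
      (inA = false → ∀ y ∈ B, y.2.1 = false ∧ y.2.2.1 = 0) →
      (∀ x ∈ L, x.2.1 = true → x.2.2 = 0) →
      (∀ y ∈ B, y.2.1 = true → y.2.2.1 = 0) →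
      (∀ y ∈ B, ValidS y.2.1 y.2.2.2) →
      ValidS inA (Ch.node a k kA L B)

mutual
  /-- the component of the extracted subforest containing this node (meaningful when
  this node belongs to `A`): decorations `𝔫_A + π𝔢_A`, extended decorations kept. -/
  def extr : Ch d → Tr d
    | .node a _ kA L B =>
        Tr.node a (kA + ((L.map fun x => x.2.2).sum + (B.map fun y => y.2.2.1).sum))
          (L.filterMap fun x => if x.2.1 then some x.1 else none) (extrB B)
  def extrB : List (Nd d × Bool × Nd d × Ch d) → List (Nd d × Tr d)
    | [] => []
    | y :: ys => if y.2.1 then (y.1, extr y.2.2.2) :: extrB ys else extrB ys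
end

mutual
  /-- the components of the extracted subforest not containing this node -/
  def comps : Ch d → Multiset (Tr d)
    | .node _ _ _ _ B => compsB B
  def compsB : List (Nd d × Bool × Nd d × Ch d) → Multiset (Tr d)
    | [] => 0
    | y :: ys =>
        (if y.2.1 then comps y.2.2.2
         else (if hasA false y.2.2.2 then {extr y.2.2.2} else 0) + comps y.2.2.2) +
          compsB ys
end

/-- the extracted forest `ℰ(τ; A, 𝔫_A, 𝔢_A)` -/
def extrF (c : Ch d) : Multiset (Tr d) :=
  (if hasA false c then {extr c} else 0) + comps c

mutual
  /-- the contracted tree `𝒞(τ; A, 𝔫_A, 𝔢_A)`: each connected component of `A` is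
  contracted to a single node, carrying decoration `[𝔫 - 𝔫_A]_A`, extended decoration
  `𝔬(A) + |𝔫_A + π𝔢_A|_𝔰`, and the remaining edges are decorated by `𝔢 + 𝔢_A`. -/
  def contract (s : Fin d → ℝ) (cXi cI : ℝ) : Ch d → Tr d
    | .node a k kA L B =>
        contractB s cXi cI
          (Tr.node
            (a + Tr.degN s (kA + ((L.map fun x => x.2.2).sum +
                (B.map fun y => y.2.2.1).sum)) +
              (L.map fun x => if x.2.1 then cXi - Tr.degN s x.1 else 0).sum +
              (B.map fun y => if y.2.1 then cI - Tr.degN s y.1 else 0).sum)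
            (k - kA)
            (L.filterMap fun x => if x.2.1 then none else some (x.1 + x.2.2))
            []) B
  def contractB (s : Fin d → ℝ) (cXi cI : ℝ) :
      Tr d → List (Nd d × Bool × Nd d × Ch d) → Tr d
    | acc, [] => acc
    | acc, y :: ys =>
        contractB s cXi cI
          (Tr.mul acc
            (if y.2.1 then contract s cXi cI y.2.2.2
             else Tr.node 0 0 [] [(y.1 + y.2.2.1, contract s cXi cI y.2.2.2)])) ys
end

mutual
  /-- the combinatorial weight `binom(𝔫, 𝔫_A) / 𝔢_A!` of the extraction data -/
  def wt : Ch d → ℝ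
    | .node _ k kA L B =>
        (∏ i, ((k i).choose (kA i) : ℝ)) *
          (L.map fun x => ((ndFact x.2.2 : ℝ))⁻¹).prod * wtB B
  def wtB : List (Nd d × Bool × Nd d × Ch d) → ℝ
    | [] => 1
    | y :: ys => ((ndFact y.2.2.1 : ℝ))⁻¹ * wt y.2.2.2 * wtB ys
end

end Ch

mutual
  /-- set all extended decorations of a tree to `0` (the projection `𝒬`) -/
  def setO0 : Tr d → Tr d
    | .node _ k L B => Tr.node 0 k L (setO0B B)
  def setO0B : List (Nd d × Tr d) → List (Nd d × Tr d)
    | [] => []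
    | y :: ys => (y.1, setO0 y.2) :: setO0B ys
end

/-- `𝔗₋`: non-planted strongly conforming trees (of the reduced structure) of negative
degree with vanishing polynomial decoration at the root -/
def TMinusRed (R : Set (Multiset (ET d))) (s : Fin d → ℝ) (cXi cI : ℝ) (τ : Tr d) :
    Prop :=
  Tr.ZeroO τ ∧ Tr.Conforms R τ ∧ Tr.deg s cXi cI τ < 0 ∧ Tr.rootK τ = 0 ∧ ¬ Tr.Planted τ

/-- coefficients of the extraction–contraction coproduct `Δ⁻ : 𝒯 → ℱ₋ ⊗ 𝒯` of the
reduced structure: the coefficient of `F ⊗ σ` in `Δ⁻τ`. -/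
def dmRedCoeff (R : Set (Multiset (ET d))) (s : Fin d → ℝ) (cXi cI : ℝ)
    (τ : Tr d) (F : Multiset (Tr d)) (σ : Tr d) : ℝ :=
  ∑ᶠ c ∈ {c : Ch d | Ch.shape c = τ ∧ Ch.Valid false c ∧ Ch.extrF c = F ∧
      setO0 (Ch.contract s cXi cI c) = σ ∧ ∀ ρ ∈ F, TMinusRed R s cXi cI ρ}, Ch.wt c

/-- coefficients of the multiplicative extension `Δ⁻ : 𝒯₊ → ℱ₋ ⊗ 𝒯₊` (reduced
structure), which never extracts a subforest containing the root -/
def dmRedPCoeff (R : Set (Multiset (ET d))) (s : Fin d → ℝ) (cXi cI : ℝ)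
    (τ : Tr d) (F : Multiset (Tr d)) (σ : Tr d) : ℝ :=
  ∑ᶠ c ∈ {c : Ch d | Ch.shape c = τ ∧ Ch.Valid false c ∧ Ch.hasA false c = false ∧
      Ch.extrF c = F ∧ setO0 (Ch.contract s cXi cI c) = σ ∧
      ∀ ρ ∈ F, TMinusRed R s cXi cI ρ}, Ch.wt c

/-- coefficients of `Δ⁻ : 𝒯₋ → ℱ₋ ⊗ 𝒯₋` (right factor projected by `π₋`) -/
def dmRedMCoeff (R : Set (Multiset (ET d))) (s : Fin d → ℝ) (cXi cI : ℝ)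
    (τ : Tr d) (F : Multiset (Tr d)) (σ : Tr d) : ℝ :=
  ∑ᶠ c ∈ {c : Ch d | Ch.shape c = τ ∧ Ch.Valid false c ∧ Ch.extrF c = F ∧
      setO0 (Ch.contract s cXi cI c) = σ ∧ TMinusRed R s cXi cI σ ∧
      ∀ ρ ∈ F, TMinusRed R s cXi cI ρ}, Ch.wt c

/-- `𝔗∘^ex`: all contractions of strongly conforming (reduced) trees along extracted
subforests with components in `𝔗₋` -/
def TcircEx (R : Set (Multiset (ET d))) (s : Fin d → ℝ) (cXi cI : ℝ) : Set (Tr d) :=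
  {σ | ∃ c : Ch d, Tr.ZeroO (Ch.shape c) ∧ Tr.Conforms R (Ch.shape c) ∧
      Ch.Valid false c ∧ Ch.contract s cXi cI c = σ ∧
      ∀ ρ ∈ Ch.extrF c, TMinusRed R s cXi cI ρ}

/-- `𝔗₋^ex`: non-planted trees in `𝔗∘^ex` of negative `𝔰`-degree with vanishing
polynomial decoration at the root -/
def TMinusEx (R : Set (Multiset (ET d))) (s : Fin d → ℝ) (cXi cI : ℝ) (τ : Tr d) :
    Prop :=
  τ ∈ TcircEx R s cXi cI ∧ Tr.deg s cXi cI τ < 0 ∧ Tr.rootK τ = 0 ∧ ¬ Tr.Planted τ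

/-- `𝔗₊^ex`: products `X^k ∏_j 𝓘_{m_j}[τ_j]` with `τ_j ∈ 𝔗∘^ex` and
`|𝓘_{m_j}[τ_j]|₊ > 0` -/
def TPlusEx (R : Set (Multiset (ET d))) (s : Fin d → ℝ) (cXi cI : ℝ) : Tr d → Prop :=
  fun τ => match τ with
  | .node a _ L B => a = 0 ∧ L = [] ∧
      ∀ y ∈ B, y.2 ∈ TcircEx R s cXi cI ∧
        0 < Tr.degp s cXi cI y.2 + cI - Tr.degN s y.1

/-- coefficients of the extraction–contraction coproduct `Δ⁻_ex : 𝒯^ex → ℱ₋^ex ⊗ 𝒯^ex` -/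
def dmExCoeff (R : Set (Multiset (ET d))) (s : Fin d → ℝ) (cXi cI : ℝ)
    (τ : Tr d) (F : Multiset (Tr d)) (σ : Tr d) : ℝ :=
  ∑ᶠ c ∈ {c : Ch d | Ch.shape c = τ ∧ Ch.Valid false c ∧ Ch.extrF c = F ∧
      Ch.contract s cXi cI c = σ ∧ ∀ ρ ∈ F, TMinusEx R s cXi cI ρ}, Ch.wt c

/-- coefficients of the multiplicative extension `Δ⁻_ex : 𝒯₊^ex → ℱ₋^ex ⊗ 𝒯₊^ex`,
which never extracts a subforest containing the root -/
def dmExPCoeff (R : Set (Multiset (ET d))) (s : Fin d → ℝ) (cXi cI : ℝ)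
    (τ : Tr d) (F : Multiset (Tr d)) (σ : Tr d) : ℝ :=
  ∑ᶠ c ∈ {c : Ch d | Ch.shape c = τ ∧ Ch.Valid false c ∧ Ch.hasA false c = false ∧
      Ch.extrF c = F ∧ Ch.contract s cXi cI c = σ ∧
      ∀ ρ ∈ F, TMinusEx R s cXi cI ρ}, Ch.wt c

/-- coefficients of `Δ⁻_ex : 𝒯₋^ex → ℱ₋^ex ⊗ ℱ₋^ex` (right factor projected) -/
def dmExMCoeff (R : Set (Multiset (ET d))) (s : Fin d → ℝ) (cXi cI : ℝ)
    (τ : Tr d) (F : Multiset (Tr d)) (σ : Tr d) : ℝ :=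
  ∑ᶠ c ∈ {c : Ch d | Ch.shape c = τ ∧ Ch.Valid false c ∧ Ch.extrF c = F ∧
      Ch.contract s cXi cI c = σ ∧ TMinusEx R s cXi cI σ ∧
      ∀ ρ ∈ F, TMinusEx R s cXi cI ρ}, Ch.wt c

variable {d : ℕ}

/-- the set `𝔗₊` of products `X^k ∏_j 𝓘_{m_j}[τ_j]` with `τ_j ∈ 𝔗∘` and
`|𝓘_{m_j}[τ_j]|_𝔰 > 0` (reduced structure) -/
def TPlusRed (R : Set (Multiset (ET d))) (s : Fin d → ℝ) (cXi cI : ℝ) : Tr d → Prop :=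
  fun τ => match τ with
  | .node a _ L B => a = 0 ∧ L = [] ∧
      ∀ y ∈ B, Tr.ZeroO y.2 ∧ Tr.Conforms R y.2 ∧
        0 < Tr.deg s cXi cI y.2 + cI - Tr.degN s y.1

/-- forests: multisets of trees -/
abbrev Forest (d : ℕ) := Multiset (Tr d)

/-- the free commutative algebra on trees, spanned by forests -/
abbrev FAlg (d : ℕ) := AddMonoidAlgebra ℝ (Forest d)

/-- the model of `ℱ₋ ⊗ ℱ₋` -/
abbrev FFAlg (d : ℕ) := AddMonoidAlgebra ℝ (Forest d × Forest d)

/-- view an element of `ℱ₋ ⊗ 𝒯₋` as an element of `ℱ₋ ⊗ ℱ₋` -/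
def toFF (v : (Forest d × Tr d) →₀ ℝ) : FFAlg d :=
  AddMonoidAlgebra.ofCoeff (Finsupp.mapDomain (fun p => (p.1, ({p.2} : Multiset (Tr d)))) v)

/-- the multiplicative extension of `Δ⁻ : 𝒯₋ → ℱ₋ ⊗ 𝒯₋` to an algebra morphism
`Δ⁻ : ℱ₋ → ℱ₋ ⊗ ℱ₋` -/
def dmForest (dmM : Tr d → ((Forest d × Tr d) →₀ ℝ)) (F : Forest d) : FFAlg d :=
  (F.map fun τ => toFF (dmM τ)).prod

/-- basis elements of `ℱ₋` -/
def fsingle (F : Forest d) (c : ℝ) : FAlg d := AddMonoidAlgebra.ofCoeff (Finsupp.single F c)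

/-- the forest product on `ℱ₋` -/
def fmul (u v : FAlg d) : FAlg d := u * v

/-!
On `X^k Ξ_L` everything is explicit. An extraction whose extracted forest lies in `𝔗₋` can
use neither the root decoration nor extra edge decorations, since they would end up at the
root of an extracted tree; so it is just a choice `β` of noises, and
`Δ⁻(X^n Ξ_L) = Σ_β F_β ⊗ X^n Ξ_{L∖β}` with the same admissible `β` for every `n`, while
`Δ⁻ X^m = 𝐞 ⊗ X^m` and `Δ⁺(X^k Ξ_L) = Σ_{n ≤ k} binom(k, n) X^n Ξ_L ⊗ X^{k-n}`. Both sides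
equal `Σ_β Σ_{n ≤ k} binom(k, n) F_β ⊗ X^n Ξ_{L∖β} ⊗ X^{k-n}`.
-/

theorem Finsupp.sum_finsetSum_single_smul {α ι R M : Type*} [Semiring R] [AddCommMonoid M]
    [Module R M] (t : Finset ι) (x : ι → α) (a : ι → R) (g : α → M) :
    (∑ i ∈ t, Finsupp.single (x i) (a i)).sum (fun p c => c • g p) = ∑ i ∈ t, a i • g (x i) := by
  rw [← Finsupp.sum_finsetSum_index (fun p => zero_smul R (g p)) (fun p _ _ => add_smul _ _ (g p))]
  exact Finset.sum_congr rfl fun i _ => Finsupp.sum_single_index (zero_smul R _)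

def ndChoose (k n : Nd d) : ℝ := ∏ i, ((k i).choose (n i) : ℝ)

theorem mul2_single_left (p : Tr d × Tr d) (c : ℝ) (v : (Tr d × Tr d) →₀ ℝ) :
    mul2 (Finsupp.single p c) v
      = v.sum fun q e => Finsupp.single (Tr.mul p.1 q.1, Tr.mul p.2 q.2) (c * e) :=
  Finsupp.sum_single_index (by simp [Finsupp.sum])

theorem mul2_single_finsetSum {ι : Type*} (p : Tr d × Tr d) (c : ℝ) (t : Finset ι)
    (x : ι → Tr d × Tr d) (a : ι → ℝ) :
    mul2 (Finsupp.single p c) (∑ i ∈ t, Finsupp.single (x i) (a i))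
      = ∑ i ∈ t, Finsupp.single (Tr.mul p.1 (x i).1, Tr.mul p.2 (x i).2) (c * a i) := by
  rw [mul2_single_left,
    ← Finsupp.sum_finsetSum_index (by simp) (by intros; simp [mul_add, Finsupp.single_add])]
  exact Finset.sum_congr rfl fun i _ => Finsupp.sum_single_index (by simp)

theorem mul2_finsetSum_single {ι : Type*} (t : Finset ι) (x : ι → Tr d × Tr d) (a : ι → ℝ)
    (q : Tr d × Tr d) (c : ℝ) :
    mul2 (∑ i ∈ t, Finsupp.single (x i) (a i)) (Finsupp.single q c)
      = ∑ i ∈ t, Finsupp.single (Tr.mul (x i).1 q.1, Tr.mul (x i).2 q.2) (a i * c) := by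
  unfold mul2
  rw [← Finsupp.sum_finsetSum_index (by simp [Finsupp.sum])
    (by intros; simp [add_mul, Finsupp.single_add, Finsupp.sum_add])]
  refine Finset.sum_congr rfl fun i _ => ?_
  rw [Finsupp.sum_single_index (by simp [Finsupp.sum]), Finsupp.sum_single_index (by simp)]

theorem dp_noiseTree (s : Fin d → ℝ) (cXi cI : ℝ) (k : Nd d) (L : List (Nd d)) :
    dp s cXi cI (Tr.node 0 k L [])
      = ∑ n ∈ Finset.Iic k, Finsupp.single (Tr.node 0 n L [], Tr.Xpow (k - n)) (ndChoose k n) := by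
  rw [dp, dpB, dpX, mul2_finsetSum_single, mul2_single_finsetSum]
  refine Finset.sum_congr rfl fun n _ => ?_
  simp [Tr.mul, Tr.one, Tr.Xpow, ndChoose]

def boolLists (m : ℕ) : Finset (List Bool) :=
  (Finset.univ : Finset (Fin m → Bool)).image List.ofFn

theorem mem_boolLists {m : ℕ} {β : List Bool} : β ∈ boolLists m ↔ β.length = m := by
  simp only [boolLists, Finset.mem_image, Finset.mem_univ, true_and]
  constructor
  · rintro ⟨f, rfl⟩
    exact List.length_ofFn
  · rintro rfl
    exact ⟨β.get, List.ofFn_get β⟩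

def noiseEdges (L : List (Nd d)) (β : List Bool) : List (Nd d × Bool × Nd d) :=
  (L.zip β).map fun x => (x.1, x.2, 0)

/-- The extraction datum on `X^n Ξ_L` extracting exactly the noises marked by `β`. -/
def noiseCh (n : Nd d) (L : List (Nd d)) (β : List Bool) : Ch d :=
  Ch.node 0 n 0 (noiseEdges L β) []

def selectedNoises (L : List (Nd d)) (β : List Bool) : List (Nd d) :=
  (L.zip β).filterMap fun x => if x.2 then some x.1 else none

def unselectedNoises (L : List (Nd d)) (β : List Bool) : List (Nd d) :=
  (L.zip β).filterMap fun x => if x.2 then none else some x.1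

def noiseForest (L : List (Nd d)) (β : List Bool) : Forest d :=
  if β.any id then {Tr.node 0 0 (selectedNoises L β) []} else 0

theorem map_fst_noiseEdges (L : List (Nd d)) {β : List Bool} (h : β.length = L.length) :
    (noiseEdges L β).map (fun x => x.1) = L := by
  rw [noiseEdges, List.map_map]
  exact List.map_fst_zip h.ge

theorem map_inA_noiseEdges (L : List (Nd d)) {β : List Bool} (h : β.length = L.length) :
    (noiseEdges L β).map (fun x => x.2.1) = β := by
  rw [noiseEdges, List.map_map]
  exact List.map_snd_zip h.le

theorem extraDec_eq_zero_of_mem_noiseEdges {L : List (Nd d)} {β : List Bool}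
    {x : Nd d × Bool × Nd d} (hx : x ∈ noiseEdges L β) : x.2.2 = 0 := by
  obtain ⟨y, _, rfl⟩ := List.mem_map.1 hx
  rfl

theorem shape_noiseCh (n : Nd d) (L : List (Nd d)) {β : List Bool} (h : β.length = L.length) :
    Ch.shape (noiseCh n L β) = Tr.node 0 n L [] := by
  rw [noiseCh, Ch.shape, Ch.shapeB, map_fst_noiseEdges L h]

theorem hasA_noiseCh (n : Nd d) (L : List (Nd d)) {β : List Bool} (h : β.length = L.length) :
    Ch.hasA false (noiseCh n L β) = β.any id := by
  conv_rhs => rw [← map_inA_noiseEdges L h, List.any_map]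
  simp [noiseCh, Ch.hasA]

theorem valid_noiseCh (n : Nd d) (L : List (Nd d)) (β : List Bool) :
    Ch.Valid false (noiseCh n L β) :=
  Ch.Valid.node (fun _ => Nat.zero_le _) (fun _ => rfl)
    (fun _ hx _ => extraDec_eq_zero_of_mem_noiseEdges hx)
    (fun _ _ hx => extraDec_eq_zero_of_mem_noiseEdges hx)
    (by simp) (by simp) (by simp)

theorem extrF_noiseCh (n : Nd d) (L : List (Nd d)) {β : List Bool} (h : β.length = L.length) :
    Ch.extrF (noiseCh n L β) = noiseForest L β := by
  have hdec : ((noiseEdges L β).map fun x => x.2.2).sum = 0 :=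
    List.sum_eq_zero fun _ hx => by
      obtain ⟨x, hx', rfl⟩ := List.mem_map.1 hx
      exact extraDec_eq_zero_of_mem_noiseEdges hx'
  have hextr : Ch.extr (noiseCh n L β) = Tr.node 0 0 (selectedNoises L β) [] := by
    rw [noiseCh, Ch.extr, Ch.extrB, hdec, noiseEdges, List.filterMap_map]
    simp [selectedNoises]
  rw [Ch.extrF, hasA_noiseCh n L h, hextr, noiseForest,
    show Ch.comps (noiseCh n L β) = 0 from rfl]
  split <;> simp

theorem setO0_contract_noiseCh (s : Fin d → ℝ) (cXi cI : ℝ) (n : Nd d) (L : List (Nd d))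
    (β : List Bool) :
    setO0 (Ch.contract s cXi cI (noiseCh n L β)) = Tr.node 0 n (unselectedNoises L β) [] := by
  have hunsel : ((noiseEdges L β).filterMap fun x =>
      if x.2.1 = true then none else some (x.1 + x.2.2)) = unselectedNoises L β := by
    rw [noiseEdges, List.filterMap_map, unselectedNoises]
    refine List.filterMap_congr fun x _ => ?_
    by_cases hx : x.2 <;> simp [hx]
  rw [noiseCh, Ch.contract, Ch.contractB, tsub_zero, hunsel, setO0, setO0B]

theorem wt_noiseCh (n : Nd d) (L : List (Nd d)) (β : List Bool) :
    Ch.wt (noiseCh n L β) = 1 := by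
  have hfact : ((noiseEdges L β).map fun x => ((ndFact x.2.2 : ℕ) : ℝ)⁻¹).prod = 1 :=
    List.prod_eq_one fun _ hx => by
      obtain ⟨x, hx', rfl⟩ := List.mem_map.1 hx
      simp [extraDec_eq_zero_of_mem_noiseEdges hx', ndFact]
  rw [noiseCh, Ch.wt, Ch.wtB, hfact]
  simp

theorem noiseCh_injOn (n : Nd d) (L : List (Nd d)) :
    Set.InjOn (noiseCh n L) {β | β.length = L.length} := by
  intro β hβ β' hβ' heq
  simp only [noiseCh, Ch.node.injEq, true_and] at heq
  rw [← map_inA_noiseEdges L hβ, ← map_inA_noiseEdges L hβ', heq.1]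

theorem Ch.eq_node_of_shape_eq {c : Ch d} {a : ℝ} {n : Nd d} {L : List (Nd d)}
    (h : Ch.shape c = Tr.node a n L []) :
    ∃ kA L', c = Ch.node a n kA L' [] ∧ L'.map (fun x => x.1) = L := by
  obtain ⟨a', n', kA, L', B⟩ := c
  rw [Ch.shape] at h
  injection h with ha hn hL hB
  subst ha hn
  obtain rfl : B = [] := by
    cases B with
    | nil => rfl
    | cons y ys => simp [Ch.shapeB] at hB
  exact ⟨kA, L', rfl, hL⟩

/-- The extracted component at the root of `X^n Ξ_L` has root decoration `𝔫_A + π𝔢_A`,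
which must vanish for a tree of `𝔗₋`; so all of `𝔫_A` and `𝔢_A` vanish. -/
theorem extraDecs_eq_zero_of_rootK_extrF {a : ℝ} {n kA : Nd d} {L' : List (Nd d × Bool × Nd d)}
    (hval : Ch.Valid false (Ch.node a n kA L' []))
    (hroot : ∀ ρ ∈ Ch.extrF (Ch.node a n kA L' []), Tr.rootK ρ = 0) :
    kA = 0 ∧ ∀ x ∈ L', x.2.2 = 0 := by
  cases hA : Ch.hasA false (Ch.node a n kA L' []) with
  | false =>
    cases hval with
    | node _ hkA _ hdec _ _ _ => exact ⟨hkA hA, hdec hA⟩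
  | true =>
    have hmem : Ch.extr (Ch.node a n kA L' []) ∈ Ch.extrF (Ch.node a n kA L' []) := by
      simp [Ch.extrF, hA]
    have hsum := hroot _ hmem
    simp only [Ch.extr, Tr.rootK, List.map_nil, List.sum_nil, add_zero, add_eq_zero] at hsum
    exact ⟨hsum.1, fun x hx => List.sum_eq_zero_iff.1 hsum.2 _ (List.mem_map_of_mem hx)⟩

theorem eq_noiseEdges {L' : List (Nd d × Bool × Nd d)} (h : ∀ x ∈ L', x.2.2 = 0) :
    L' = noiseEdges (L'.map fun x => x.1) (L'.map fun x => x.2.1) := by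
  induction L' with
  | nil => rfl
  | cons x xs ih =>
    obtain ⟨l, b, e⟩ := x
    obtain rfl : e = 0 := h _ List.mem_cons_self
    rw [List.map_cons, List.map_cons, noiseEdges, List.zip_cons_cons, List.map_cons,
      ← noiseEdges, ← ih fun y hy => h y (List.mem_cons_of_mem _ hy)]

theorem exists_eq_noiseCh {R : Set (Multiset (ET d))} {s : Fin d → ℝ} {cXi cI : ℝ}
    {n : Nd d} {L : List (Nd d)} {c : Ch d} (hshape : Ch.shape c = Tr.node 0 n L [])
    (hval : Ch.Valid false c) (hminus : ∀ ρ ∈ Ch.extrF c, TMinusRed R s cXi cI ρ) :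
    ∃ β : List Bool, β.length = L.length ∧ c = noiseCh n L β := by
  obtain ⟨kA, L', rfl, rfl⟩ := Ch.eq_node_of_shape_eq hshape
  obtain ⟨rfl, hdec⟩ :=
    extraDecs_eq_zero_of_rootK_extrF hval fun ρ hρ => (hminus ρ hρ).2.2.2.1
  exact ⟨L'.map fun x => x.2.1, by simp, by rw [noiseCh, ← eq_noiseEdges hdec]⟩

def admissibleNoiseSelections (R : Set (Multiset (ET d))) (s : Fin d → ℝ) (cXi cI : ℝ)
    (L : List (Nd d)) : Finset (List Bool) :=
  (boolLists L.length).filter fun β => ∀ ρ ∈ noiseForest L β, TMinusRed R s cXi cI ρ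

/-- `Δ⁻(X^n Ξ_L)`: one term per admissible choice of the noises extracted at the root -/
def dmNoiseTree (R : Set (Multiset (ET d))) (s : Fin d → ℝ) (cXi cI : ℝ) (n : Nd d)
    (L : List (Nd d)) : (Forest d × Tr d) →₀ ℝ :=
  ∑ β ∈ admissibleNoiseSelections R s cXi cI L,
    Finsupp.single (noiseForest L β, Tr.node 0 n (unselectedNoises L β) []) 1

theorem dmRedCoeff_noiseTree (R : Set (Multiset (ET d))) (s : Fin d → ℝ) (cXi cI : ℝ)
    (n : Nd d) (L : List (Nd d)) (F : Forest d) (σ : Tr d) :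
    dmRedCoeff R s cXi cI (Tr.node 0 n L []) F σ = dmNoiseTree R s cXi cI n L (F, σ) := by
  set T := (admissibleNoiseSelections R s cXi cI L).filter
    fun β => (noiseForest L β, Tr.node 0 n (unselectedNoises L β) []) = (F, σ)
  have hT : ∀ β ∈ T, β.length = L.length := fun β hβ =>
    mem_boolLists.1 (Finset.mem_filter.1 (Finset.mem_filter.1 hβ).1).1
  have hset : {c : Ch d | Ch.shape c = Tr.node 0 n L [] ∧ Ch.Valid false c ∧
      Ch.extrF c = F ∧ setO0 (Ch.contract s cXi cI c) = σ ∧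
      ∀ ρ ∈ F, TMinusRed R s cXi cI ρ} = noiseCh n L '' ↑T := by
    ext c
    simp only [T, admissibleNoiseSelections, Set.mem_ofPred_eq, Set.mem_image, Finset.mem_coe,
      Finset.mem_filter, mem_boolLists, Prod.mk.injEq]
    constructor
    · rintro ⟨hshape, hval, rfl, rfl, hminus⟩
      obtain ⟨β, hβ, rfl⟩ := exists_eq_noiseCh hshape hval hminus
      rw [extrF_noiseCh n L hβ] at hminus ⊢
      exact ⟨β, ⟨⟨hβ, hminus⟩, rfl, (setO0_contract_noiseCh s cXi cI n L β).symm⟩, rfl⟩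
    · rintro ⟨β, ⟨⟨hβ, hminus⟩, rfl, rfl⟩, rfl⟩
      exact ⟨shape_noiseCh n L hβ, valid_noiseCh n L β, extrF_noiseCh n L hβ,
        setO0_contract_noiseCh s cXi cI n L β, hminus⟩
  rw [dmRedCoeff, hset, finsum_mem_image fun β hβ β' hβ' =>
      noiseCh_injOn n L (hT β hβ) (hT β' hβ'), finsum_mem_coe_finset, dmNoiseTree,
    Finsupp.finsetSum_apply, Finset.sum_filter]
  simp only [wt_noiseCh, Finsupp.single_apply]

theorem hasA_eq_false_of_shape_eq_Xpow {c : Ch d} {m : Nd d} (h : Ch.shape c = Tr.Xpow m) :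
    Ch.hasA false c = false := by
  obtain ⟨kA, L', rfl, hL'⟩ := Ch.eq_node_of_shape_eq h
  rw [List.map_eq_nil_iff] at hL'
  simp [hL', Ch.hasA]

theorem dmRedPCoeff_Xpow (R : Set (Multiset (ET d))) (s : Fin d → ℝ) (cXi cI : ℝ)
    (m : Nd d) (F : Forest d) (σ : Tr d) :
    dmRedPCoeff R s cXi cI (Tr.Xpow m) F σ = Finsupp.single (0, Tr.Xpow m) 1 (F, σ) := by
  have hP : dmRedPCoeff R s cXi cI (Tr.Xpow m) F σ = dmRedCoeff R s cXi cI (Tr.Xpow m) F σ := by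
    refine finsum_mem_congr (Set.ext fun c => ?_) fun _ _ => rfl
    simp only [Set.mem_ofPred_eq]
    exact ⟨fun h => ⟨h.1, h.2.1, h.2.2.2⟩,
      fun h => ⟨h.1, h.2.1, hasA_eq_false_of_shape_eq_Xpow h.1, h.2.2⟩⟩
  have hselect : admissibleNoiseSelections R s cXi cI [] = {[]} := by
    ext β
    simp only [admissibleNoiseSelections, Finset.mem_filter, mem_boolLists, List.length_nil,
      List.length_eq_zero_iff, Finset.mem_singleton, and_iff_left_iff_imp]
    rintro rfl
    simp [noiseForest]
  rw [hP, Tr.Xpow, dmRedCoeff_noiseTree, dmNoiseTree, hselect, Finset.sum_singleton]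
  rfl

theorem node_mem_Tcirc_of_node_mem {R : Set (Multiset (ET d))} {k n : Nd d} {L : List (Nd d)}
    (h : Tr.node 0 k L [] ∈ Tcirc R) : Tr.node 0 n L [] ∈ Tcirc R := by
  obtain ⟨-, ⟨hroot, -⟩⟩ := h
  exact ⟨Tr.ZeroO.node (by simp), Tr.Conforms.node hroot (by simp)⟩

/-- The cointeraction identity
`ℳ_{(13)(2)(4)}(Δ⁻ ⊗ Δ⁻)Δ⁺ τ = (id ⊗ Δ⁺)Δ⁻ τ` holds for trees `τ = X^k Ξ_L ∈ 𝔗∘`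
with only noise edges. -/
theorem cointeraction_noise_trees
    (hd : 0 < d) (s : Fin d → ℝ) (hs : ∀ i, 1 ≤ s i)
    (cXi cI : ℝ) (hXi : cXi < 0) (hI : 0 < cI)
    (R : Set (Multiset (ET d))) (hnorm : Normal R) (hsub : Subcritical s cXi cI R)
    -- the coaction `Δ⁻ : 𝒯 → ℱ₋ ⊗ 𝒯` (its existence and range is completeness of `R`)
    (dmT : Tr d → ((Forest d × Tr d) →₀ ℝ))
    (hdmT : ∀ τ ∈ Tcirc R, ∀ p, dmT τ p = dmRedCoeff R s cXi cI τ p.1 p.2)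
    (hdmTc : ∀ τ ∈ Tcirc R, ∀ p ∈ (dmT τ).support, p.2 ∈ Tcirc R)
    -- the coaction `Δ⁻ : 𝒯₊ → ℱ₋ ⊗ 𝒯₊`
    (dmTP : Tr d → ((Forest d × Tr d) →₀ ℝ))
    (hdmTP : ∀ τ, TPlusRed R s cXi cI τ → ∀ p, dmTP τ p = dmRedPCoeff R s cXi cI τ p.1 p.2)
    (hdmTPc : ∀ τ, TPlusRed R s cXi cI τ → ∀ p ∈ (dmTP τ).support, TPlusRed R s cXi cI p.2)
    (k : Nd d) (L : List (Nd d)) (hτ : Tr.node 0 k L [] ∈ Tcirc R) :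
    ((dp s cXi cI (Tr.node 0 k L [])).sum fun p c =>
        c • ((dmT p.1).sum fun q cq =>
          cq • Finsupp.mapDomain (fun r => (q.1 + r.1, q.2, r.2)) (dmTP p.2)))
      = (dmT (Tr.node 0 k L [])).sum fun p c =>
          c • Finsupp.mapDomain (fun q => (p.1, q.1, q.2)) (dp s cXi cI p.2) := by
  have hdmT_noiseTree (n : Nd d) : dmT (Tr.node 0 n L []) = dmNoiseTree R s cXi cI n L :=
    Finsupp.ext fun p => (hdmT _ (node_mem_Tcirc_of_node_mem hτ) p).trans
      (dmRedCoeff_noiseTree R s cXi cI n L p.1 p.2)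
  have hdmTP_Xpow (m : Nd d) : dmTP (Tr.Xpow m) = Finsupp.single (0, Tr.Xpow m) 1 :=
    Finsupp.ext fun p => (hdmTP (Tr.Xpow m) ⟨rfl, rfl, by simp⟩ p).trans
      (dmRedPCoeff_Xpow R s cXi cI m p.1 p.2)
  simp only [dp_noiseTree, hdmT_noiseTree, dmNoiseTree, hdmTP_Xpow,
    Finsupp.sum_finsetSum_single_smul]
  simp only [Finsupp.mapDomain_single, Finsupp.mapDomain_finsetSum, Finset.smul_sum,
    Finsupp.smul_single, add_zero, smul_eq_mul, mul_one, one_smul]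
  exact Finset.sum_comm

end RS
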